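/- arXiv:2602.19129 — 4 statements merged into one kernel-verified Lean document; each statement's English description precedes it below -/
import Mathlib

section
/- Suppose the n×n×T array X has entries x_{ijt} = θ_i^T Λ_t φ_j + β_{it} + α_{jt}, and suppose α = U_α V_α^T with U_α ∈ ℝ^{n×k_α}, V_α ∈ ℝ^{T×k_α}. Then the mode-2 unfolding of X admits the rank factorization M2(X) = U2 · V2^T, where U2 = (Φ, U_α, 1_n) ∈ ℝ^{n×(k2+k_α+1)} is formed by concatenating columns, and V2 = ((I_T⊗Θ) M2(S)^T, (I_T⊗1_n) V_α, vec(β)) ∈ ℝ^{(nT)×(k2+k_α+1)}. Equivalently, M2(X) = Φ M2(S)(I_T ⊗ Θ^T) + α(I_T ⊗ 1_n^T) + 1_n vec(β)^T. -/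
open Matrix Kronecker

/-- Mode-2 unfolding of a 3-way array: rows indexed by the second mode,
columns by pairs `(t, i)` from the third and first modes. -/
def mode2 {d1 d2 d3 : ℕ} (X : Fin d1 → Fin d2 → Fin d3 → ℝ) :
    Matrix (Fin d2) (Fin d3 × Fin d1) ℝ :=
  Matrix.of fun j p => X p.2 j p.1

/-- The matrix `I_T ⊗ 1_nᵀ ∈ ℝ^{T × (nT)}` (identity Kronecker all-ones row). -/
def idKronOnesRow (T n : ℕ) : Matrix (Fin T) (Fin T × Fin n) ℝ :=
  Matrix.reindex (Equiv.prodPUnit (Fin T)) (Equiv.refl _)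
    ((1 : Matrix (Fin T) (Fin T) ℝ) ⊗ₖ (Matrix.of fun (_ : PUnit.{1}) (_ : Fin n) => (1 : ℝ)))

/-- The matrix `I_T ⊗ 1_n ∈ ℝ^{(nT) × T}` (identity Kronecker all-ones column). -/
def idKronOnesCol (T n : ℕ) : Matrix (Fin T × Fin n) (Fin T) ℝ :=
  Matrix.reindex (Equiv.refl _) (Equiv.prodPUnit (Fin T))
    ((1 : Matrix (Fin T) (Fin T) ℝ) ⊗ₖ (Matrix.of fun (_ : Fin n) (_ : PUnit.{1}) => (1 : ℝ)))

/-! The `(j, (t, i))` entries of `Φ M2(S) (I_T ⊗ Θᵀ)`, `α (I_T ⊗ 1_nᵀ)` and `1_n vec(β)ᵀ` are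
`θ_iᵀ Λ_t φ_j`, `α_{jt}` and `β_{it}`, which gives the additive form. The factorization is the
additive form read blockwise: `U2 V2ᵀ` is the sum of the products of the column blocks of `U2`
with the corresponding row blocks of `V2ᵀ`, and `U_α ((I_T ⊗ 1_n) V_α)ᵀ = α (I_T ⊗ 1_nᵀ)`. -/

@[simp]
lemma mode2_apply {d1 d2 d3 : ℕ} (X : Fin d1 → Fin d2 → Fin d3 → ℝ) (j : Fin d2) (t : Fin d3)
    (i : Fin d1) : mode2 X j (t, i) = X i j t :=
  rfl

@[simp]
lemma idKronOnesRow_apply {T n : ℕ} (s t : Fin T) (i : Fin n) :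
    idKronOnesRow T n s (t, i) = (1 : Matrix (Fin T) (Fin T) ℝ) s t := by
  simp [idKronOnesRow]

lemma transpose_idKronOnesCol (T n : ℕ) : (idKronOnesCol T n)ᵀ = idKronOnesRow T n := by
  ext s ⟨t, i⟩
  simp [idKronOnesCol, one_apply, eq_comm]

lemma mul_idKronOnesRow_apply {m : Type*} {T n : ℕ} (A : Matrix m (Fin T) ℝ) (j : m) (t : Fin T)
    (i : Fin n) : (A * idKronOnesRow T n) j (t, i) = A j t := by
  simp [mul_apply, idKronOnesRow_apply, one_apply]

lemma mul_one_kronecker_apply {R m l k p : Type*} [CommSemiring R] [Fintype l] [DecidableEq l]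
    [Fintype k] (M : Matrix m (l × k) R) (B : Matrix k p R) (j : m) (t : l) (i : p) :
    (M * ((1 : Matrix l l R) ⊗ₖ B)) j (t, i) = ∑ a, M j (t, a) * B a i := by
  simp [mul_apply, Fintype.sum_prod_type, one_apply]

lemma mul_mode2_mul_one_kronecker_transpose_apply {n T k1 k2 : ℕ}
    (Θ : Matrix (Fin n) (Fin k1) ℝ) (Φ : Matrix (Fin n) (Fin k2) ℝ)
    (Λ : Fin T → Matrix (Fin k1) (Fin k2) ℝ) (S : Fin k1 → Fin k2 → Fin T → ℝ)
    (hS : ∀ a b t, S a b t = Λ t a b) (j : Fin n) (t : Fin T) (i : Fin n) :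
    (Φ * mode2 S * ((1 : Matrix (Fin T) (Fin T) ℝ) ⊗ₖ Θᵀ)) j (t, i) = Θ i ⬝ᵥ (Λ t *ᵥ Φ j) := by
  rw [mul_one_kronecker_apply]
  simp only [mul_apply, mode2_apply, hS, transpose_apply, dotProduct, mulVec, Finset.sum_mul,
    Finset.mul_sum]
  exact Finset.sum_congr rfl fun a _ => Finset.sum_congr rfl fun b _ => by ring

/-- for the multilayer latent space array
`x_{ijt} = θ_iᵀ Λ_t φ_j + β_{it} + α_{jt}` with `α = U_α V_αᵀ`, the mode-2 unfolding
factorizes as `M2(X) = U2 · V2ᵀ` with `U2 = (Φ, U_α, 1_n)` and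
`V2 = ((I_T ⊗ Θ) M2(S)ᵀ, (I_T ⊗ 1_n) V_α, vec(β))`; equivalently,
`M2(X) = Φ M2(S)(I_T ⊗ Θᵀ) + α (I_T ⊗ 1_nᵀ) + 1_n vec(β)ᵀ`. -/
theorem mode2_unfolding_factorization {n T k1 k2 kα : ℕ}
    (Θ : Matrix (Fin n) (Fin k1) ℝ) (Φ : Matrix (Fin n) (Fin k2) ℝ)
    (Λ : Fin T → Matrix (Fin k1) (Fin k2) ℝ)
    (α β : Matrix (Fin n) (Fin T) ℝ)
    (Uα : Matrix (Fin n) (Fin kα) ℝ) (Vα : Matrix (Fin T) (Fin kα) ℝ)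
    (hα : α = Uα * Vαᵀ)
    (X : Fin n → Fin n → Fin T → ℝ)
    (hX : ∀ i j t, X i j t = Θ i ⬝ᵥ (Λ t *ᵥ Φ j) + β i t + α j t)
    (S : Fin k1 → Fin k2 → Fin T → ℝ) (hS : ∀ a b t, S a b t = Λ t a b) :
    mode2 X =
      Matrix.fromCols
        (Matrix.fromCols Φ Uα) (Matrix.of fun (_ : Fin n) (_ : PUnit.{1}) => (1 : ℝ)) *
      (Matrix.fromCols
        (Matrix.fromCols (((1 : Matrix (Fin T) (Fin T) ℝ) ⊗ₖ Θ) * (mode2 S)ᵀ)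
          (idKronOnesCol T n * Vα))
        (Matrix.of fun (p : Fin T × Fin n) (_ : PUnit.{1}) => β p.2 p.1))ᵀ ∧
    mode2 X =
      Φ * mode2 S * ((1 : Matrix (Fin T) (Fin T) ℝ) ⊗ₖ Θᵀ) + α * idKronOnesRow T n +
        Matrix.vecMulVec (fun (_ : Fin n) => (1 : ℝ)) (fun p : Fin T × Fin n => β p.2 p.1) := by
  have hsum : mode2 X = Φ * mode2 S * ((1 : Matrix (Fin T) (Fin T) ℝ) ⊗ₖ Θᵀ) +
      α * idKronOnesRow T n +
      vecMulVec (fun (_ : Fin n) => (1 : ℝ)) (fun p : Fin T × Fin n => β p.2 p.1) := by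
    ext j ⟨t, i⟩
    simp only [mode2_apply, hX, Matrix.add_apply, mul_idKronOnesRow_apply, vecMulVec_apply,
      one_mul, mul_mode2_mul_one_kronecker_transpose_apply Θ Φ Λ S hS]
    ring
  refine ⟨?_, hsum⟩
  rw [hsum, transpose_fromCols, transpose_fromCols, fromCols_mul_fromRows, fromCols_mul_fromRows,
    transpose_mul, transpose_transpose, ← kroneckerMap_transpose, transpose_one, ← Matrix.mul_assoc,
    transpose_mul, transpose_idKronOnesCol, ← Matrix.mul_assoc, ← hα]
  rw [vecMulVec_eq PUnit]
  rfl
end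

section
/- Suppose the n×n×T array X has entries x_{ijt} = θ_i^T Λ_t φ_j + β_{it} + α_{jt}, and suppose 1_n^T Θ = 0 and 1_n^T Φ = 0 (the columns of Θ and Φ sum to zero). Then two-sided centering of the mode-2 unfolding removes the degree terms exactly: J_n · M2(X) · J_{n,T}^T = Φ · M2(S) · (I_T ⊗ Θ^T), where J_n = I_n − (1/n) 1_n 1_n^T and J_{n,T} = I_T ⊗ J_n. -/
open Matrix Kronecker

/-- The centering matrix `J_n = I_n − (1/n) 1_n 1_nᵀ`. -/
noncomputable def centering (n : ℕ) : Matrix (Fin n) (Fin n) ℝ :=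
  1 - (n : ℝ)⁻¹ • Matrix.vecMulVec (fun _ => (1 : ℝ)) (fun _ => (1 : ℝ))

lemma centering_apply (n : ℕ) (i j : Fin n) :
    centering n i j = (if i = j then (1:ℝ) else 0) - (n : ℝ)⁻¹ := by
  simp [centering, Matrix.one_apply, Matrix.vecMulVec_apply]

lemma centering_mul_vec_sum (n : ℕ) (v : Fin n → ℝ) (i : Fin n) :
    ∑ j, centering n i j * v j = v i - (n : ℝ)⁻¹ * ∑ j, v j := by
  simp only [centering_apply, sub_mul, Finset.sum_sub_distrib, ite_mul, one_mul, zero_mul,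
    Finset.sum_ite_eq, Finset.mem_univ, if_true, Finset.mul_sum]

/-- if the columns of `Θ` and `Φ` sum to zero, two-sided centering of the
mode-2 unfolding removes the degree terms exactly:
`J_n · M2(X) · J_{n,T}ᵀ = Φ · M2(S) · (I_T ⊗ Θᵀ)` where `J_{n,T} = I_T ⊗ J_n`. -/
theorem centered_mode2_unfolding {n T k1 k2 : ℕ}
    (Θ : Matrix (Fin n) (Fin k1) ℝ) (Φ : Matrix (Fin n) (Fin k2) ℝ)
    (Λ : Fin T → Matrix (Fin k1) (Fin k2) ℝ)
    (α β : Matrix (Fin n) (Fin T) ℝ)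
    (hΘ : ∀ a, ∑ i, Θ i a = 0) (hΦ : ∀ b, ∑ j, Φ j b = 0)
    (X : Fin n → Fin n → Fin T → ℝ)
    (hX : ∀ i j t, X i j t = Θ i ⬝ᵥ (Λ t *ᵥ Φ j) + β i t + α j t)
    (S : Fin k1 → Fin k2 → Fin T → ℝ) (hS : ∀ a b t, S a b t = Λ t a b) :
    centering n * mode2 X * ((1 : Matrix (Fin T) (Fin T) ℝ) ⊗ₖ centering n)ᵀ =
      Φ * mode2 S * ((1 : Matrix (Fin T) (Fin T) ℝ) ⊗ₖ Θᵀ) := by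
  ext j p
  obtain ⟨t, i⟩ := p
  have hn : (0 : ℝ) < (n : ℝ) := by exact_mod_cast j.pos
  -- signal term (for this fixed j)
  set m : Fin n → Fin T → ℝ := fun i t => Θ i ⬝ᵥ (Λ t *ᵥ Φ j) with hm
  -- sum over j' of the signal term vanishes by hΦ
  have hΦsum : ∀ (i : Fin n) (t : Fin T), ∑ j', Θ i ⬝ᵥ (Λ t *ᵥ Φ j') = 0 := by
    intro i t
    simp only [dotProduct, mulVec, dotProduct]
    rw [Finset.sum_comm]
    refine Finset.sum_eq_zero fun a _ => ?_
    rw [← Finset.mul_sum, Finset.sum_comm]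
    have : ∑ b, ∑ j', Λ t a b * Φ j' b = 0 := by
      refine Finset.sum_eq_zero fun b _ => ?_
      rw [← Finset.mul_sum, hΦ, mul_zero]
    rw [this, mul_zero]
  -- sum over i' of the signal term vanishes by hΘ
  have hΘsum : ∀ t : Fin T, ∑ i', m i' t = 0 := by
    intro t
    simp only [hm, dotProduct]
    rw [Finset.sum_comm]
    refine Finset.sum_eq_zero fun a _ => ?_
    rw [← Finset.sum_mul, hΘ, zero_mul]
  -- first product, entrywise
  have key1 : ∀ (t : Fin T) (i : Fin n),
      (centering n * mode2 X) j (t, i) =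
        m i t + α j t - (n : ℝ)⁻¹ * ∑ j', α j' t := by
    intro t i
    rw [Matrix.mul_apply]
    simp only [mode2, Matrix.of_apply]
    rw [centering_mul_vec_sum]
    simp only [hX]
    rw [Finset.sum_add_distrib, Finset.sum_add_distrib, hΦsum i t, Finset.sum_const,
      Finset.card_univ, Fintype.card_fin, nsmul_eq_mul]
    field_simp
    ring
  -- the left-hand side entry
  have keyL : (centering n * mode2 X * ((1 : Matrix (Fin T) (Fin T) ℝ) ⊗ₖ centering n)ᵀ)
      j (t, i) = m i t := by
    rw [Matrix.mul_apply]
    rw [Fintype.sum_prod_type]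
    rw [Finset.sum_eq_single t]
    · simp only [Matrix.transpose_apply, Matrix.kroneckerMap_apply, Matrix.one_apply_eq, one_mul]
      have : ∀ i' : Fin n,
          (centering n * mode2 X) j (t, i') * centering n i i' =
          centering n i i' * (m i' t + α j t - (n : ℝ)⁻¹ * ∑ j', α j' t) := by
        intro i'; rw [key1, mul_comm]
      rw [Finset.sum_congr rfl fun i' _ => this i', centering_mul_vec_sum]
      rw [Finset.sum_sub_distrib, Finset.sum_add_distrib, hΘsum t, Finset.sum_const,
        Finset.sum_const, Finset.card_univ, Fintype.card_fin, nsmul_eq_mul, nsmul_eq_mul]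
      field_simp
      ring
    · intro t' _ ht'
      refine Finset.sum_eq_zero fun i' _ => ?_
      simp [Matrix.one_apply, Ne.symm ht']
    · simp
  rw [keyL, Matrix.mul_apply, Fintype.sum_prod_type, Finset.sum_eq_single t]
  · simp only [Matrix.transpose_apply, Matrix.kroneckerMap_apply, Matrix.one_apply_eq, one_mul]
    simp only [hm, dotProduct, mulVec, dotProduct, Matrix.mul_apply, mode2, Matrix.of_apply, hS]
    refine Finset.sum_congr rfl fun a _ => ?_
    rw [Finset.mul_sum, Finset.sum_mul]
    exact Finset.sum_congr rfl fun b _ => by ring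
  · intro t' _ ht'
    refine Finset.sum_eq_zero fun a _ => ?_
    simp [Matrix.one_apply, ht']
  · simp
end

section
/- (Lemma 1, mode 1.) Let Θ ∈ ℝ^{n×k1}, Φ ∈ ℝ^{n×k2}, U_β ∈ ℝ^{n×k_β}, V_β ∈ ℝ^{T×k_β}, U_α ∈ ℝ^{n×k_α}, V_α ∈ ℝ^{T×k_α}, α = U_α V_α^T, and core unfolding M1(S) ∈ ℝ^{k1×(T k2)}. Set d1 = k1 + k_β + 1, U1 = (Θ, U_β, 1_n) ∈ ℝ^{n×d1}, and V1 = ((I_T⊗Φ) M1(S)^T, (I_T⊗1_n) V_β, vec(α)) ∈ ℝ^{(nT)×d1}. Assume: (i) Θ^T Θ = n·I_{k1}, Φ^T Φ = n·I_{k2}, 1_n^T Θ = 0, Θ^T U_β = 0, 1_n^T Φ = 0, Φ^T U_α = 0; (ii) (1/T)·M1(S) M1(S)^T is diagonal with strictly decreasing, strictly positive diagonal entries; (iii) U^svd ∈ ℝ^{n×d1} and V^svd ∈ ℝ^{(nT)×d1} satisfy U1 V1^T = U^svd (V^svd)^T, (U^svd)^T U^svd = n·I_{d1}, and (V^svd)^T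 V^svd is diagonal with strictly decreasing, strictly positive, pairwise distinct diagonal entries. Then there exist indices 1 ≤ j_1 < j_2 < ... < j_{k1} ≤ d1 and signs r_1, ..., r_{k1} ∈ {−1, +1} such that for each l ∈ [k1], the l-th column of Θ equals r_l times the j_l-th column of U^svd, and the l-th column of (I_T⊗Φ) M1(S)^T equals r_l times the j_l-th column of V^svd. -/
/-!
Write `M = U1 V1ᵀ` and `A = (I_T ⊗ Φ) M1(S)ᵀ`. The orthogonality conditions kill every block of
`U1ᵀ Θ` and `V1ᵀ A` except the first, so `Mᵀ Θ = n A` and `M A = n T Θ D` with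
`D = diag d`: the columns of `Θ` and `A` are singular pairs of `M`. Writing
`M = U^svd (V^svd)ᵀ`, the vector `(U^svd)ᵀ θ_l` is then an eigenvector of `(V^svd)ᵀ V^svd = diag e`
for the eigenvalue `n T d_l`; as the `e_j` are distinct it is supported on a single index `j_l`,
so `θ_l` and `a_l` are one common multiple of the `j_l`-th columns of `U^svd` and `V^svd`. Both
`θ_l` and that column of `U^svd` have squared norm `n`, so the multiple is `±1`, and
`e_{j_l} = n T d_l` with `d`, `e` strictly decreasing makes `l ↦ j_l` increasing.
-/

open Matrix Kronecker

namespace Matrix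

section SingularPairs

variable {𝕜 ι κ m : Type*} [Field 𝕜] [Fintype ι] [Fintype κ] [Fintype m] [DecidableEq m]

theorem exists_eq_single_of_diagonal_mulVec_eq_smul {e : m → 𝕜} (he : Function.Injective e)
    {y : m → 𝕜} (hy : y ≠ 0) {μ : 𝕜} (h : diagonal e *ᵥ y = μ • y) :
    ∃ j, e j = μ ∧ y = Pi.single j (y j) := by
  have hcoord : ∀ i, y i ≠ 0 → e i = μ := fun i hi =>
    mul_right_cancel₀ hi (by simpa [mulVec_diagonal] using congrFun h i)
  obtain ⟨j, hj⟩ := Function.ne_iff.mp hy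
  refine ⟨j, hcoord j hj, funext fun i => ?_⟩
  by_cases hij : i = j
  · subst hij; simp
  · rw [Pi.single_eq_of_ne hij]
    by_contra hi
    exact hij (he ((hcoord i hi).trans (hcoord j hj).symm))

theorem exists_eq_smul_col_of_singular_pair {U : Matrix ι m 𝕜} {V : Matrix κ m 𝕜} {c ν : 𝕜}
    {e : m → 𝕜} (hU : Uᵀ * U = c • 1) (hV : Vᵀ * V = diagonal e) (he : Function.Injective e)
    (hc : c ≠ 0) (hν : ν ≠ 0) {x : ι → 𝕜} {z : κ → 𝕜} (hx : x ≠ 0)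
    (hxz : (U * Vᵀ)ᵀ *ᵥ x = c • z) (hzx : (U * Vᵀ) *ᵥ z = ν • x) :
    ∃ j, e j = ν ∧ ∃ s : 𝕜, x = s • U.col j ∧ z = s • V.col j := by
  have hz : c • z = V *ᵥ (Uᵀ *ᵥ x) := by
    rw [← hxz, transpose_mul, transpose_transpose, mulVec_mulVec]
  have hx' : (c * ν) • x = U *ᵥ (diagonal e *ᵥ (Uᵀ *ᵥ x)) := by
    calc (c * ν) • x = (U * Vᵀ) *ᵥ (c • z) := by rw [mul_smul, ← hzx, mulVec_smul]
      _ = U *ᵥ ((Vᵀ * V) *ᵥ (Uᵀ *ᵥ x)) := by simp only [hz, mulVec_mulVec, Matrix.mul_assoc]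
      _ = _ := by rw [hV]
  have hy_eig : diagonal e *ᵥ (Uᵀ *ᵥ x) = ν • (Uᵀ *ᵥ x) := by
    refine smul_right_injective _ hc ?_
    calc c • (diagonal e *ᵥ (Uᵀ *ᵥ x)) = Uᵀ *ᵥ (U *ᵥ (diagonal e *ᵥ (Uᵀ *ᵥ x))) := by
          rw [mulVec_mulVec _ Uᵀ U, hU, smul_mulVec, one_mulVec]
      _ = c • ν • (Uᵀ *ᵥ x) := by rw [← hx', mulVec_smul, mul_smul]
  have hy : Uᵀ *ᵥ x ≠ 0 := by
    intro hy0
    rw [hy0, mulVec_zero, mulVec_zero, smul_eq_zero] at hx'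
    exact hx (hx'.resolve_left (mul_ne_zero hc hν))
  obtain ⟨j, hej, hyj⟩ := exists_eq_single_of_diagonal_mulVec_eq_smul he hy hy_eig
  set a := (Uᵀ *ᵥ x) j
  refine ⟨j, hej, a / c, smul_right_injective _ (mul_ne_zero hc hν) ?_,
    smul_right_injective _ hc ?_⟩
  · beta_reduce
    rw [hx', hyj, diagonal_mulVec_single, mulVec_single, op_smul_eq_smul, smul_smul, hej]
    field_simp
  · beta_reduce
    rw [hz, hyj, mulVec_single, op_smul_eq_smul, smul_smul]
    field_simp

theorem col_dotProduct_self_eq_of_transpose_mul_self {k : Type*} [DecidableEq k]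
    {X : Matrix ι k 𝕜} {c : 𝕜} (hX : Xᵀ * X = c • 1) (l : k) : X.col l ⬝ᵥ X.col l = c := by
  have h : (Xᵀ * X) l l = c := by rw [hX, smul_apply, one_apply_eq, smul_eq_mul, mul_one]
  exact h

theorem exists_signed_cols_of_singular_pairs {k : Type*} [Fintype k] [DecidableEq k]
    {U : Matrix ι m 𝕜} {V : Matrix κ m 𝕜} {X : Matrix ι k 𝕜} {Z : Matrix κ k 𝕜} {c : 𝕜}
    {e : m → 𝕜} {ν : k → 𝕜} (hU : Uᵀ * U = c • 1) (hV : Vᵀ * V = diagonal e)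
    (he : Function.Injective e) (hc : c ≠ 0) (hν : ∀ l, ν l ≠ 0) (hX : Xᵀ * X = c • 1)
    (hXZ : (U * Vᵀ)ᵀ * X = c • Z) (hZX : (U * Vᵀ) * Z = X * diagonal ν) :
    ∃ (jdx : k → m) (r : k → 𝕜), (∀ l, e (jdx l) = ν l) ∧ (∀ l, r l = 1 ∨ r l = -1) ∧
      (∀ l i, X i l = r l * U i (jdx l)) ∧ (∀ l p, Z p l = r l * V p (jdx l)) := by
  have hcol : ∀ l, ∃ j, e j = ν l ∧ ∃ s : 𝕜, X.col l = s • U.col j ∧ Z.col l = s • V.col j := by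
    intro l
    have hXl := col_dotProduct_self_eq_of_transpose_mul_self hX l
    refine exists_eq_smul_col_of_singular_pair hU hV he hc (hν l) ?_ ?_ ?_
    · rintro h0
      rw [h0, zero_dotProduct] at hXl
      exact hc hXl.symm
    · exact congrArg (·.col l) hXZ
    · refine (congrArg (·.col l) hZX).trans (funext fun i => ?_)
      simp [mul_comm]
  choose jdx hjdx r hXU hZV using hcol
  refine ⟨jdx, r, hjdx, fun l => ?_, fun l i => congrFun (hXU l) i, fun l p => congrFun (hZV l) p⟩
  have hXl := col_dotProduct_self_eq_of_transpose_mul_self hX l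
  have hUj := col_dotProduct_self_eq_of_transpose_mul_self hU (jdx l)
  rw [hXU l, smul_dotProduct, dotProduct_smul, hUj, smul_eq_mul, smul_eq_mul] at hXl
  exact mul_self_eq_one_iff.mp (mul_right_cancel₀ hc (by rw [mul_assoc, hXl, one_mul]))

end SingularPairs

theorem nonempty_of_transpose_mul_self_eq_diagonal {R κ m : Type*} [CommSemiring R] [Fintype κ]
    [DecidableEq m] {V : Matrix κ m R} {e : m → R} (hV : Vᵀ * V = diagonal e) {j : m}
    (hj : e j ≠ 0) : Nonempty κ := by
  by_contra h
  rw [not_nonempty_iff] at h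
  apply hj
  rw [← diagonal_apply_eq e j, ← hV, mul_apply, Finset.univ_eq_empty, Finset.sum_empty]

section Kronecker

variable {R ι τ κ κ' : Type*} [CommSemiring R] [Fintype ι] [Fintype τ] [DecidableEq τ]

theorem ones_transpose_mul_eq_zero {X : Matrix ι κ R} (hX : ∀ b, ∑ i, X i b = 0) :
    (of fun (_ : ι) (_ : PUnit.{1}) => (1 : R))ᵀ * X = 0 := by
  ext u b
  simpa [mul_apply] using hX b

theorem one_kronecker_transpose_mul_one_kronecker (X : Matrix ι κ R) (Y : Matrix ι κ' R) :
    ((1 : Matrix τ τ R) ⊗ₖ X)ᵀ * ((1 : Matrix τ τ R) ⊗ₖ Y) = (1 : Matrix τ τ R) ⊗ₖ (Xᵀ * Y) := by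
  rw [← kroneckerMap_transpose, ← mul_kronecker_mul, transpose_one, Matrix.one_mul]

theorem vecCol_transpose_mul_one_kronecker (α : Matrix ι τ R) (Φ : Matrix ι κ R) :
    (of fun (p : τ × ι) (_ : PUnit.{1}) => α p.2 p.1)ᵀ * ((1 : Matrix τ τ R) ⊗ₖ Φ) =
      of fun _ q => (Φᵀ * α) q.2 q.1 := by
  ext u ⟨t, b⟩
  simp [mul_apply, Fintype.sum_prod_type, one_apply, mul_comm]

end Kronecker

end Matrix

theorem idKronOnesCol_transpose_mul_one_kronecker {T n k : ℕ} (Φ : Matrix (Fin n) (Fin k) ℝ)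
    (hΦ : ∀ b, ∑ i, Φ i b = 0) :
    (idKronOnesCol T n)ᵀ * ((1 : Matrix (Fin T) (Fin T) ℝ) ⊗ₖ Φ) = 0 := by
  rw [idKronOnesCol, reindex_apply, transpose_submatrix, Equiv.refl_symm, Equiv.coe_refl,
    ← submatrix_id_id ((1 : Matrix (Fin T) (Fin T) ℝ) ⊗ₖ Φ),
    ← submatrix_mul _ _ _ _ _ Function.bijective_id, one_kronecker_transpose_mul_one_kronecker,
    ones_transpose_mul_eq_zero hΦ, kronecker_zero]
  rfl

section ModeOne

variable {n T k1 k2 kβ : ℕ} (Θ : Matrix (Fin n) (Fin k1) ℝ) (Φ : Matrix (Fin n) (Fin k2) ℝ)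
  (Uβ : Matrix (Fin n) (Fin kβ) ℝ) (Vβ : Matrix (Fin T) (Fin kβ) ℝ) (α : Matrix (Fin n) (Fin T) ℝ)
  (W : Matrix (Fin k1) (Fin T × Fin k2) ℝ)

-- The factors `U1 = (Θ, U_β, 1_n)` and `V1` of the paper.
def mode1Left : Matrix (Fin n) ((Fin k1 ⊕ Fin kβ) ⊕ PUnit.{1}) ℝ :=
  fromCols (fromCols Θ Uβ) (of fun _ _ => 1)

def mode1Right : Matrix (Fin T × Fin n) ((Fin k1 ⊕ Fin kβ) ⊕ PUnit.{1}) ℝ :=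
  fromCols (fromCols (((1 : Matrix (Fin T) (Fin T) ℝ) ⊗ₖ Φ) * Wᵀ) (idKronOnesCol T n * Vβ))
    (of fun p _ => α p.2 p.1)

variable {Θ Φ Uβ Vβ α W}

theorem mode1_transpose_mul (hΘ : Θᵀ * Θ = (n : ℝ) • 1) (hΘc : ∀ a, ∑ i, Θ i a = 0)
    (hΘUβ : Θᵀ * Uβ = 0) :
    (mode1Left Θ Uβ * (mode1Right Φ Vβ α W)ᵀ)ᵀ * Θ =
      (n : ℝ) • (((1 : Matrix (Fin T) (Fin T) ℝ) ⊗ₖ Φ) * Wᵀ) := by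
  have hUβΘ : Uβᵀ * Θ = 0 := by simpa using congrArg transpose hΘUβ
  rw [transpose_mul, transpose_transpose, Matrix.mul_assoc, mode1Left, transpose_fromCols,
    transpose_fromCols, fromRows_mul, fromRows_mul, hΘ, hUβΘ, ones_transpose_mul_eq_zero hΘc, mode1Right,
    fromCols_mul_fromRows, fromCols_mul_fromRows, Matrix.mul_zero, Matrix.mul_zero, add_zero,
    add_zero, Matrix.mul_smul, Matrix.mul_one]

theorem mode1_mul (hΦ : Φᵀ * Φ = (n : ℝ) • 1) (hΦc : ∀ b, ∑ j, Φ j b = 0)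
    (hΦα : Φᵀ * α = 0) :
    (mode1Left Θ Uβ * (mode1Right Φ Vβ α W)ᵀ) * (((1 : Matrix (Fin T) (Fin T) ℝ) ⊗ₖ Φ) * Wᵀ) =
      (n : ℝ) • (Θ * (W * Wᵀ)) := by
  set K := (1 : Matrix (Fin T) (Fin T) ℝ) ⊗ₖ Φ
  have hA : (K * Wᵀ)ᵀ * (K * Wᵀ) = (n : ℝ) • (W * Wᵀ) := by
    rw [transpose_mul, transpose_transpose, Matrix.mul_assoc, ← Matrix.mul_assoc Kᵀ,
      one_kronecker_transpose_mul_one_kronecker, hΦ, kronecker_smul, one_kronecker_one,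
      Matrix.smul_mul, Matrix.one_mul, Matrix.mul_smul]
  have hB : (idKronOnesCol T n * Vβ)ᵀ * (K * Wᵀ) = 0 := by
    rw [transpose_mul, Matrix.mul_assoc, ← Matrix.mul_assoc _ K,
      idKronOnesCol_transpose_mul_one_kronecker Φ hΦc, Matrix.zero_mul, Matrix.mul_zero]
  have hα : (of fun (p : Fin T × Fin n) (_ : PUnit.{1}) => α p.2 p.1)ᵀ * (K * Wᵀ) = 0 := by
    rw [← Matrix.mul_assoc, vecCol_transpose_mul_one_kronecker, hΦα]
    exact Matrix.zero_mul _
  rw [Matrix.mul_assoc, mode1Right, transpose_fromCols, transpose_fromCols, fromRows_mul,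
    fromRows_mul, hA, hB, hα, mode1Left, fromCols_mul_fromRows, fromCols_mul_fromRows,
    Matrix.mul_zero, Matrix.mul_zero, add_zero, add_zero, Matrix.mul_smul]

end ModeOne

/-- Lemma 1, mode 1: under the identifiability conditions, the columns
of `Θ` (resp. of `(I_T ⊗ Φ) M1(S)ᵀ`) are, up to signs, columns of the scaled singular
factor `U^svd` (resp. `V^svd`) of `U1 V1ᵀ`, at a common increasing set of indices. -/
theorem lemma1_mode1 {n T k1 k2 kα kβ : ℕ}
    (Θ : Matrix (Fin n) (Fin k1) ℝ) (Φ : Matrix (Fin n) (Fin k2) ℝ)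
    (Uβ : Matrix (Fin n) (Fin kβ) ℝ) (Vβ : Matrix (Fin T) (Fin kβ) ℝ)
    (Uα : Matrix (Fin n) (Fin kα) ℝ) (Vα : Matrix (Fin T) (Fin kα) ℝ)
    (α : Matrix (Fin n) (Fin T) ℝ) (hα : α = Uα * Vαᵀ)
    (W : Matrix (Fin k1) (Fin T × Fin k2) ℝ)  -- the core unfolding `M1(S)`
    (Usvd : Matrix (Fin n) (Fin (k1 + kβ + 1)) ℝ)
    (Vsvd : Matrix (Fin T × Fin n) (Fin (k1 + kβ + 1)) ℝ)
    -- (i) orthogonality / centering conditions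
    (hΘorth : Θᵀ * Θ = (n : ℝ) • (1 : Matrix (Fin k1) (Fin k1) ℝ))
    (hΦorth : Φᵀ * Φ = (n : ℝ) • (1 : Matrix (Fin k2) (Fin k2) ℝ))
    (hΘc : ∀ a, ∑ i, Θ i a = 0) (hΘUβ : Θᵀ * Uβ = 0)
    (hΦc : ∀ b, ∑ j, Φ j b = 0) (hΦUα : Φᵀ * Uα = 0)
    -- (ii) `(1/T)·M1(S) M1(S)ᵀ` diagonal with strictly decreasing positive diagonal
    (hW : ∃ d : Fin k1 → ℝ, (T : ℝ)⁻¹ • (W * Wᵀ) = Matrix.diagonal d ∧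
      StrictAnti d ∧ ∀ i, 0 < d i)
    -- (iii) scaled SVD of `U1 V1ᵀ`
    (hfact :
      Matrix.fromCols
          (Matrix.fromCols Θ Uβ) (Matrix.of fun (_ : Fin n) (_ : PUnit.{1}) => (1 : ℝ)) *
        (Matrix.fromCols
          (Matrix.fromCols (((1 : Matrix (Fin T) (Fin T) ℝ) ⊗ₖ Φ) * Wᵀ)
            (idKronOnesCol T n * Vβ))
          (Matrix.of fun (p : Fin T × Fin n) (_ : PUnit.{1}) => α p.2 p.1))ᵀ =
        Usvd * Vsvdᵀ)
    (hUsvd : Usvdᵀ * Usvd = (n : ℝ) • (1 : Matrix (Fin (k1 + kβ + 1)) (Fin (k1 + kβ + 1)) ℝ))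
    (hVsvd : ∃ e : Fin (k1 + kβ + 1) → ℝ, Vsvdᵀ * Vsvd = Matrix.diagonal e ∧
      StrictAnti e ∧ ∀ i, 0 < e i) :
    ∃ (jdx : Fin k1 → Fin (k1 + kβ + 1)) (r : Fin k1 → ℝ),
      StrictMono jdx ∧ (∀ l, r l = 1 ∨ r l = -1) ∧
      (∀ l i, Θ i l = r l * Usvd i (jdx l)) ∧
      (∀ l p, ((((1 : Matrix (Fin T) (Fin T) ℝ) ⊗ₖ Φ) * Wᵀ)) p l = r l * Vsvd p (jdx l)) := by
  obtain ⟨d, hd, hd_anti, hd_pos⟩ := hW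
  obtain ⟨e, he, he_anti, he_pos⟩ := hVsvd
  obtain ⟨t, i⟩ := nonempty_of_transpose_mul_self_eq_diagonal he (he_pos 0).ne'
  have hT : (0 : ℝ) < T := Nat.cast_pos.mpr (Fin.pos t)
  have hn : (0 : ℝ) < n := Nat.cast_pos.mpr (Fin.pos i)
  have hWW : W * Wᵀ = (T : ℝ) • diagonal d := by rw [← hd, smul_inv_smul₀ hT.ne']
  have hΦα : Φᵀ * α = 0 := by rw [hα, ← Matrix.mul_assoc, hΦUα, Matrix.zero_mul]
  have hM : mode1Left Θ Uβ * (mode1Right Φ Vβ α W)ᵀ = Usvd * Vsvdᵀ := hfact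
  obtain ⟨jdx, r, hjdx, hr, hΘU, hAV⟩ :=
    exists_signed_cols_of_singular_pairs (ν := ((n : ℝ) * T) • d) hUsvd he he_anti.injective hn.ne'
      (fun l => (mul_pos (mul_pos hn hT) (hd_pos l)).ne') hΘorth
      (by rw [← hM, mode1_transpose_mul hΘorth hΘc hΘUβ])
      (by rw [← hM, mode1_mul hΦorth hΦc hΦα, hWW, Matrix.mul_smul, smul_smul, diagonal_smul,
        Matrix.mul_smul])
  refine ⟨jdx, r, fun a b hab => he_anti.lt_iff_gt.mp ?_, hr, hΘU, hAV⟩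
  rw [hjdx, hjdx]
  exact smul_lt_smul_of_pos_left (hd_anti hab) (mul_pos hn hT)
end

section
/- (Proposition 1, identifiability.) Let (Θ, Φ, S, α, β, U_α, V_α, U_β, V_β) and (Θ', Φ', S', α', β', U'_α, V'_α, U'_β, V'_β) be two parameter tuples of the same dimensions, each satisfying: α = U_α V_α^T, β = U_β V_β^T; Θ^T Θ = n·I_{k1}, Φ^T Φ = n·I_{k2}, 1_n^T Θ = 0, Θ^T U_β = 0, 1_n^T Φ = 0, Φ^T U_α = 0; (1/T)·M_m(S) M_m(S)^T is diagonal with strictly decreasing, strictly positive diagonal entries for m = 1, 2; and the matrices U_m V_m^T (for m = 1, 2, with U1 = (Θ, U_β, 1_n), V1 = ((I_T⊗Φ)M1(S)^T, (I_T⊗1_n)V_β, vec(α)), U2 = (Φ, U_α, 1_n), V2 = ((I_T⊗Θ)M2(S)^T, (I_T⊗1_n)V_α, vec(β))) have d_m = k_m + k_{(·)} + 1 strictly positive, pairwise distinct singular values (and analogously for the primed tuple). If the two tuples generate the same array, i.e. θ_i^T Λ_t φ_j + β_{it} + α_{jt} = θ'^T_i Λ'_t φ'_j + β'_{it} + α'_{jt}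 for all i, j ∈ [n], t ∈ [T], then there exist diagonal matrices R1 ∈ ℝ^{k1×k1} and R2 ∈ ℝ^{k2×k2} with diagonal entries in {−1, +1} such that Θ' = Θ R1, Φ' = Φ R2, and Λ'_t = R1 Λ_t R2 for every t ∈ [T]. -/
open Matrix Kronecker

/-- Mode-1 unfolding `M1(S)` of the core array `S_{:,:,t} = Λ_t`. -/
def M1unf {T k1 k2 : ℕ} (Λ : Fin T → Matrix (Fin k1) (Fin k2) ℝ) :
    Matrix (Fin k1) (Fin T × Fin k2) ℝ :=
  Matrix.of fun a p => Λ p.1 a p.2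

/-- Mode-2 unfolding `M2(S)` of the core array `S_{:,:,t} = Λ_t`. -/
def M2unf {T k1 k2 : ℕ} (Λ : Fin T → Matrix (Fin k1) (Fin k2) ℝ) :
    Matrix (Fin k2) (Fin T × Fin k1) ℝ :=
  Matrix.of fun b p => Λ p.1 p.2 b

/-- `U1 = (Θ, U_β, 1_n)` (column concatenation). -/
def U1mat {n k1 kβ : ℕ} (Θ : Matrix (Fin n) (Fin k1) ℝ) (Uβ : Matrix (Fin n) (Fin kβ) ℝ) :
    Matrix (Fin n) ((Fin k1 ⊕ Fin kβ) ⊕ PUnit.{1}) ℝ :=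
  Matrix.fromCols (Matrix.fromCols Θ Uβ) (Matrix.of fun _ _ => (1 : ℝ))

/-- `V1 = ((I_T ⊗ Φ) M1(S)ᵀ, (I_T ⊗ 1_n) V_β, vec(α))` (column concatenation). -/
def V1mat {n T k1 k2 kβ : ℕ} (Φ : Matrix (Fin n) (Fin k2) ℝ)
    (Λ : Fin T → Matrix (Fin k1) (Fin k2) ℝ) (Vβ : Matrix (Fin T) (Fin kβ) ℝ)
    (α : Matrix (Fin n) (Fin T) ℝ) :
    Matrix (Fin T × Fin n) ((Fin k1 ⊕ Fin kβ) ⊕ PUnit.{1}) ℝ :=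
  Matrix.fromCols
    (Matrix.fromCols (((1 : Matrix (Fin T) (Fin T) ℝ) ⊗ₖ Φ) * (M1unf Λ)ᵀ)
      (idKronOnesCol T n * Vβ))
    (Matrix.of fun p _ => α p.2 p.1)

/-- `U2 = (Φ, U_α, 1_n)` (column concatenation). -/
def U2mat {n k2 kα : ℕ} (Φ : Matrix (Fin n) (Fin k2) ℝ) (Uα : Matrix (Fin n) (Fin kα) ℝ) :
    Matrix (Fin n) ((Fin k2 ⊕ Fin kα) ⊕ PUnit.{1}) ℝ :=
  Matrix.fromCols (Matrix.fromCols Φ Uα) (Matrix.of fun _ _ => (1 : ℝ))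

/-- `V2 = ((I_T ⊗ Θ) M2(S)ᵀ, (I_T ⊗ 1_n) V_α, vec(β))` (column concatenation). -/
def V2mat {n T k1 k2 kα : ℕ} (Θ : Matrix (Fin n) (Fin k1) ℝ)
    (Λ : Fin T → Matrix (Fin k1) (Fin k2) ℝ) (Vα : Matrix (Fin T) (Fin kα) ℝ)
    (β : Matrix (Fin n) (Fin T) ℝ) :
    Matrix (Fin T × Fin n) ((Fin k2 ⊕ Fin kα) ⊕ PUnit.{1}) ℝ :=
  Matrix.fromCols
    (Matrix.fromCols (((1 : Matrix (Fin T) (Fin T) ℝ) ⊗ₖ Θ) * (M2unf Λ)ᵀ)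
      (idKronOnesCol T n * Vα))
    (Matrix.of fun p _ => β p.2 p.1)

/-- The identifiability conditions (Assumption 1) for a parameter tuple of the
multilayer latent space model. -/
def Admissible {n T k1 k2 kα kβ : ℕ}
    (Θ : Matrix (Fin n) (Fin k1) ℝ) (Φ : Matrix (Fin n) (Fin k2) ℝ)
    (Λ : Fin T → Matrix (Fin k1) (Fin k2) ℝ)
    (α β : Matrix (Fin n) (Fin T) ℝ)
    (Uα : Matrix (Fin n) (Fin kα) ℝ) (Vα : Matrix (Fin T) (Fin kα) ℝ)
    (Uβ : Matrix (Fin n) (Fin kβ) ℝ) (Vβ : Matrix (Fin T) (Fin kβ) ℝ) : Prop :=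
  -- factorizations of the degree matrices
  α = Uα * Vαᵀ ∧ β = Uβ * Vβᵀ ∧
  -- condition 1: scaling, centering, orthogonality
  Θᵀ * Θ = (n : ℝ) • (1 : Matrix (Fin k1) (Fin k1) ℝ) ∧
  Φᵀ * Φ = (n : ℝ) • (1 : Matrix (Fin k2) (Fin k2) ℝ) ∧
  (∀ a, ∑ i, Θ i a = 0) ∧ Θᵀ * Uβ = 0 ∧
  (∀ b, ∑ j, Φ j b = 0) ∧ Φᵀ * Uα = 0 ∧
  -- condition 2: `(1/T)·M_m(S) M_m(S)ᵀ` diagonal, strictly decreasing, positive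
  (∃ d : Fin k1 → ℝ, (T : ℝ)⁻¹ • (M1unf Λ * (M1unf Λ)ᵀ) = Matrix.diagonal d ∧
    StrictAnti d ∧ ∀ i, 0 < d i) ∧
  (∃ d : Fin k2 → ℝ, (T : ℝ)⁻¹ • (M2unf Λ * (M2unf Λ)ᵀ) = Matrix.diagonal d ∧
    StrictAnti d ∧ ∀ i, 0 < d i) ∧
  -- condition 3: `U_m V_mᵀ` has `d_m` strictly positive, pairwise distinct singular
  -- values, witnessed by a scaled singular value decomposition
  (∃ (U : Matrix (Fin n) (Fin (k1 + kβ + 1)) ℝ)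
      (V : Matrix (Fin T × Fin n) (Fin (k1 + kβ + 1)) ℝ) (e : Fin (k1 + kβ + 1) → ℝ),
    U1mat Θ Uβ * (V1mat Φ Λ Vβ α)ᵀ = U * Vᵀ ∧
    Uᵀ * U = (n : ℝ) • (1 : Matrix (Fin (k1 + kβ + 1)) (Fin (k1 + kβ + 1)) ℝ) ∧
    Vᵀ * V = Matrix.diagonal e ∧ StrictAnti e ∧ ∀ i, 0 < e i) ∧
  (∃ (U : Matrix (Fin n) (Fin (k2 + kα + 1)) ℝ)
      (V : Matrix (Fin T × Fin n) (Fin (k2 + kα + 1)) ℝ) (e : Fin (k2 + kα + 1) → ℝ),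
    U2mat Φ Uα * (V2mat Θ Λ Vα β)ᵀ = U * Vᵀ ∧
    Uᵀ * U = (n : ℝ) • (1 : Matrix (Fin (k2 + kα + 1)) (Fin (k2 + kα + 1)) ℝ) ∧
    Vᵀ * V = Matrix.diagonal e ∧ StrictAnti e ∧ ∀ i, 0 < e i)

/-!
Multiplying the common array on the left by a centred `Θ₁ᵀ` and on the right by a centred `Φ₂`
kills the degree terms. With `Θ₁ = Θ, Φ₂ = Φ` and with `Θ₁ = Θ', Φ₂ = Φ'` this gives
`Λ_t = P Λ'_t Qᵀ` and `Λ'_t = Pᵀ Λ_t Q`, where `P = Θᵀ Θ' / n` and `Q = Φᵀ Φ' / n`.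
Both are contractions, since `n (1 - PᵀP) = (Θ' - Θ P)ᵀ (Θ' - Θ P)`, so the Frobenius norms satisfy
`‖Λ'_t‖² + tr (Λ_tᵀ (1 - P Pᵀ) Λ_t) ≤ ‖Λ_t‖² ≤ ‖Λ'_t‖²`. Hence `(1 - P Pᵀ) Λ_t = 0` for every `t`,
and as `∑_t Λ_t Λ_tᵀ = M1(S) M1(S)ᵀ` is invertible, `P` is orthogonal; then `Θ' = Θ P`.
Finally `P` conjugates the diagonal matrix `M1(S) M1(S)ᵀ / T` into its primed counterpart; both
have strictly decreasing diagonals, which forces `P` to be a diagonal sign matrix. The same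
argument applied to the transposed layers handles `Q`.
-/

open scoped MatrixOrder

namespace Matrix

variable {m k l ι : Type*}

theorem mul_mul_transpose_apply [Fintype k] [Fintype l] (A : Matrix m k ℝ) (L : Matrix k l ℝ)
    (B : Matrix m l ℝ) (i j : m) : (A * L * Bᵀ) i j = A i ⬝ᵥ (L *ᵥ B j) := by
  rw [mul_apply', dotProduct_mulVec]
  rfl

theorem transpose_mul_of_add_mul_eq_zero [Fintype m] {A : Matrix m k ℝ} {B : Matrix m l ℝ}
    (hA : ∀ a, ∑ i, A i a = 0) (hB : ∀ b, ∑ j, B j b = 0) (v w : m → ℝ) :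
    Aᵀ * of (fun i j => v i + w j) * B = 0 := by
  ext a b
  have hsplit : ∀ i j, A i a * (v i + w j) * B j b
      = (A i a * v i) * B j b + A i a * (w j * B j b) := fun i j => by ring
  simp only [mul_apply, transpose_apply, of_apply, Finset.sum_mul, zero_apply]
  rw [Finset.sum_comm]
  simp only [hsplit, Finset.sum_add_distrib, ← Finset.mul_sum, ← Finset.sum_mul, hA, hB]
  simp

theorem eq_mul_mul_transpose_of_centered [Fintype m] [Fintype k] [Fintype l] [DecidableEq k]
    [DecidableEq l] {c : ℝ} (hc : c ≠ 0)
    {A A' : Matrix m k ℝ} {B B' : Matrix m l ℝ} {L L' : Matrix k l ℝ} {v w v' w' : m → ℝ}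
    (hA : Aᵀ * A = c • 1) (hB : Bᵀ * B = c • 1)
    (hAc : ∀ a, ∑ i, A i a = 0) (hBc : ∀ b, ∑ j, B j b = 0)
    (h : ∀ i j, A i ⬝ᵥ (L *ᵥ B j) + v i + w j = A' i ⬝ᵥ (L' *ᵥ B' j) + v' i + w' j) :
    L = (c⁻¹ • (Aᵀ * A')) * L' * (c⁻¹ • (Bᵀ * B'))ᵀ := by
  have hmat : A * L * Bᵀ + of (fun i j => v i + w j)
      = A' * L' * B'ᵀ + of (fun i j => v' i + w' j) := by
    ext i j
    simpa [mul_mul_transpose_apply, add_assoc] using h i j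
  have h' := congrArg (fun X => Aᵀ * X * B) hmat
  simp only [Matrix.mul_add, Matrix.add_mul, transpose_mul_of_add_mul_eq_zero hAc hBc,
    add_zero] at h'
  have hL : Aᵀ * (A * L * Bᵀ) * B = (c * c) • L := by
    rw [show Aᵀ * (A * L * Bᵀ) * B = Aᵀ * A * L * (Bᵀ * B) by simp only [Matrix.mul_assoc], hA, hB]
    simp [smul_smul]
  have hL' : Aᵀ * (A' * L' * B'ᵀ) * B = (Aᵀ * A') * L' * (Bᵀ * B')ᵀ := by
    simp only [transpose_mul, transpose_transpose, Matrix.mul_assoc]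
  rw [hL, hL'] at h'
  rw [transpose_smul, Matrix.smul_mul, Matrix.mul_smul, Matrix.smul_mul, ← h', smul_smul,
    smul_smul, show c⁻¹ * c⁻¹ * (c * c) = 1 by field_simp, one_smul]

section ScaledIsometry

variable [Fintype m] [Fintype k] [DecidableEq k] {c : ℝ} {A A' : Matrix m k ℝ}

theorem transpose_mul_sub_mul_transpose_mul (hc : c ≠ 0) (hA : Aᵀ * A = c • 1)
    (hA' : A'ᵀ * A' = c • 1) :
    (A' - A * (c⁻¹ • (Aᵀ * A')))ᵀ * (A' - A * (c⁻¹ • (Aᵀ * A')))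
      = c • (1 - (c⁻¹ • (Aᵀ * A'))ᵀ * (c⁻¹ • (Aᵀ * A'))) := by
  have hAA : ∀ X : Matrix k k ℝ, Aᵀ * (A * X) = c • X := fun X => by
    rw [← Matrix.mul_assoc, hA, Matrix.smul_mul, Matrix.one_mul]
  simp only [transpose_sub, transpose_mul, transpose_smul, transpose_transpose, Matrix.sub_mul,
    Matrix.mul_sub, Matrix.smul_mul, Matrix.mul_smul, Matrix.mul_assoc, hAA, hA', smul_smul,
    smul_sub]
  match_scalars <;> field_simp
  ring

theorem transpose_mul_self_le_one (hc : 0 < c) (hA : Aᵀ * A = c • 1) (hA' : A'ᵀ * A' = c • 1) :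
    (c⁻¹ • (Aᵀ * A'))ᵀ * (c⁻¹ • (Aᵀ * A')) ≤ 1 := by
  rw [le_iff, ← inv_smul_smul₀ hc.ne' (1 - _), ← transpose_mul_sub_mul_transpose_mul hc.ne' hA hA',
    ← conjTranspose_eq_transpose_of_trivial]
  exact (posSemidef_conjTranspose_mul_self _).smul (inv_nonneg.mpr hc.le)

theorem mul_transpose_self_le_one (hc : 0 < c) (hA : Aᵀ * A = c • 1) (hA' : A'ᵀ * A' = c • 1) :
    (c⁻¹ • (Aᵀ * A')) * (c⁻¹ • (Aᵀ * A'))ᵀ ≤ 1 := by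
  simpa using transpose_mul_self_le_one hc hA' hA

theorem eq_mul_of_transpose_mul_self_eq_one (hc : c ≠ 0) (hA : Aᵀ * A = c • 1)
    (hA' : A'ᵀ * A' = c • 1) (h : (c⁻¹ • (Aᵀ * A'))ᵀ * (c⁻¹ • (Aᵀ * A')) = 1) :
    A' = A * (c⁻¹ • (Aᵀ * A')) := by
  have h0 := transpose_mul_sub_mul_transpose_mul hc hA hA'
  rw [h, sub_self, smul_zero, ← conjTranspose_eq_transpose_of_trivial,
    conjTranspose_mul_self_eq_zero] at h0
  exact sub_eq_zero.mp h0

end ScaledIsometry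

section Contraction

variable [Fintype k] [Fintype l]

theorem trace_transpose_mul_mul_nonneg {C : Matrix l l ℝ} (hC : C.PosSemidef) (B : Matrix l k ℝ) :
    0 ≤ trace (Bᵀ * C * B) := by
  rw [← conjTranspose_eq_transpose_of_trivial]
  exact (hC.conjTranspose_mul_mul_same B).trace_nonneg

theorem mul_eq_zero_of_trace_transpose_mul_mul_eq_zero {C : Matrix l l ℝ} (hC : C.PosSemidef)
    {B : Matrix l k ℝ} (h : trace (Bᵀ * C * B) = 0) : C * B = 0 := by
  classical
  obtain ⟨R, rfl⟩ := CStarAlgebra.nonneg_iff_eq_star_mul_self.mp hC.nonneg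
  rw [star_eq_conjTranspose, conjTranspose_eq_transpose_of_trivial] at h ⊢
  have hRB : R * B = 0 := by
    rw [← trace_conjTranspose_mul_self_eq_zero_iff, conjTranspose_eq_transpose_of_trivial]
    simpa only [transpose_mul, Matrix.mul_assoc] using h
  rw [Matrix.mul_assoc, hRB, Matrix.mul_zero]

variable [DecidableEq k] [DecidableEq l]

theorem trace_mul_transpose_add_le {Q : Matrix l l ℝ} (hQ : Q * Qᵀ ≤ 1) (P : Matrix k k ℝ)
    (X : Matrix k l ℝ) :
    trace (Pᵀ * X * Q * (Pᵀ * X * Q)ᵀ) + trace (Xᵀ * (1 - P * Pᵀ) * X) ≤ trace (X * Xᵀ) := by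
  have hcycle : trace (Xᵀ * (P * (Pᵀ * X))) = trace (Pᵀ * (X * (Xᵀ * P))) := by
    rw [trace_mul_comm, Matrix.mul_assoc, trace_mul_comm]
    simp only [Matrix.mul_assoc]
  have hsplit : trace (Pᵀ * X * Q * (Pᵀ * X * Q)ᵀ) + trace (Xᵀ * (1 - P * Pᵀ) * X)
      + trace ((Xᵀ * P)ᵀ * (1 - Q * Qᵀ) * (Xᵀ * P)) = trace (X * Xᵀ) := by
    simp only [transpose_mul, transpose_transpose, Matrix.mul_sub, Matrix.sub_mul, Matrix.mul_one,
      Matrix.mul_assoc, trace_sub, trace_mul_comm Xᵀ X]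
    rw [hcycle]
    ring
  linarith [trace_transpose_mul_mul_nonneg hQ (Xᵀ * P)]

theorem mul_transpose_eq_one_of_sandwich [Fintype ι] {P : Matrix k k ℝ} {Q : Matrix l l ℝ}
    (hP : P * Pᵀ ≤ 1) (hP' : Pᵀ * P ≤ 1) (hQ : Q * Qᵀ ≤ 1) (hQ' : Qᵀ * Q ≤ 1)
    {Λ Λ' : ι → Matrix k l ℝ} (hΛ' : ∀ t, Λ' t = Pᵀ * Λ t * Q) (hΛ : ∀ t, Λ t = P * Λ' t * Qᵀ)
    (hG : IsUnit (∑ t, Λ t * (Λ t)ᵀ)) : P * Pᵀ = 1 := by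
  have hdefect : ∀ t, trace ((Λ t)ᵀ * (1 - P * Pᵀ) * Λ t) = 0 := fun t => by
    have hdown := trace_mul_transpose_add_le hQ P (Λ t)
    have hup := trace_mul_transpose_add_le hQ' Pᵀ (Λ' t)
    rw [← hΛ'] at hdown
    simp only [transpose_transpose, ← hΛ] at hup
    linarith [trace_transpose_mul_mul_nonneg hP (Λ t), trace_transpose_mul_mul_nonneg hP' (Λ' t)]
  have hker : (1 - P * Pᵀ) * ∑ t, Λ t * (Λ t)ᵀ = 0 := by
    rw [Finset.mul_sum]
    refine Finset.sum_eq_zero fun t _ => ?_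
    rw [← Matrix.mul_assoc, mul_eq_zero_of_trace_transpose_mul_mul_eq_zero hP (hdefect t),
      Matrix.zero_mul]
  exact (sub_eq_zero.mp (hG.mul_left_eq_zero.mp hker)).symm

end Contraction

section Signs

variable [Fintype ι]

theorem isUnit_of_smul_eq_diagonal [DecidableEq ι] {G : Matrix ι ι ℝ} {c : ℝ} {d : ι → ℝ}
    (h : c • G = diagonal d) (hd : ∀ i, d i ≠ 0) : IsUnit G := by
  rw [isUnit_iff_isUnit_det, isUnit_iff_ne_zero]
  intro hG
  have hdet := congrArg det h
  rw [det_smul, hG, mul_zero, det_diagonal] at hdet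
  exact Finset.prod_ne_zero_iff.mpr (fun i _ => hd i) hdet.symm

theorem exists_apply_ne_zero_of_transpose_mul_self_eq_one [DecidableEq ι] {P : Matrix ι ι ℝ}
    (hP : Pᵀ * P = 1) (b : ι) : ∃ a, P a b ≠ 0 := by
  have hbb : ∑ a, P a b * P a b = 1 := by simpa [mul_apply] using congr_fun₂ hP b b
  obtain ⟨a, -, ha⟩ := Finset.exists_ne_zero_of_sum_ne_zero (hbb ▸ one_ne_zero)
  exact ⟨a, left_ne_zero_of_mul ha⟩

theorem isDiag_of_mul_diagonal_eq_diagonal_mul [LinearOrder ι] [DecidableEq ι]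
    {P : Matrix ι ι ℝ} {d d' : ι → ℝ} (hd : StrictAnti d) (hd' : StrictAnti d')
    (hcol : ∀ b, ∃ a, P a b ≠ 0) (h : P * diagonal d' = diagonal d * P) : P.IsDiag := by
  have hsupp : ∀ a b, P a b ≠ 0 → d' b = d a := fun a b hab => by
    have hab' := congr_fun₂ h a b
    rw [mul_diagonal, diagonal_mul] at hab'
    exact mul_left_cancel₀ hab (by linarith)
  choose f hf using hcol
  have hf_mono : StrictMono f := fun b b' hbb' => by
    rw [← hd.lt_iff_gt, ← hsupp _ _ (hf b), ← hsupp _ _ (hf b')]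
    exact hd' hbb'
  intro a b hab
  by_contra hP
  exact hab (hd.injective ((hsupp a b hP).symm.trans (hsupp _ _ (hf b))) |>.trans
    (congr_fun hf_mono.eq_id b))

theorem exists_sign_eq_diagonal_of_isDiag [DecidableEq ι] {P : Matrix ι ι ℝ} (hdiag : P.IsDiag)
    (hP : Pᵀ * P = 1) : ∃ r : ι → ℝ, (∀ i, r i = 1 ∨ r i = -1) ∧ P = diagonal r := by
  refine ⟨P.diag, fun i => ?_, hdiag.diagonal_diag.symm⟩
  rw [← hdiag.diagonal_diag, diagonal_transpose, diagonal_mul_diagonal, ← diagonal_one,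
    diagonal_eq_diagonal_iff] at hP
  exact mul_self_eq_one_iff.mp (hP i)

end Signs

end Matrix

section Unfolding

variable {T k1 k2 : ℕ}

theorem M1unf_mul_transpose (Λ : Fin T → Matrix (Fin k1) (Fin k2) ℝ) :
    M1unf Λ * (M1unf Λ)ᵀ = ∑ t, Λ t * (Λ t)ᵀ := by
  ext a a'
  rw [mul_apply, Fintype.sum_prod_type]
  simp [M1unf, Matrix.sum_apply, mul_apply]

theorem M1unf_mul_transpose_of_sandwich {P : Matrix (Fin k1) (Fin k1) ℝ}
    {Q : Matrix (Fin k2) (Fin k2) ℝ} (hQ : Q * Qᵀ = 1) {Λ Λ' : Fin T → Matrix (Fin k1) (Fin k2) ℝ}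
    (hΛ' : ∀ t, Λ' t = Pᵀ * Λ t * Q) :
    M1unf Λ' * (M1unf Λ')ᵀ = Pᵀ * (M1unf Λ * (M1unf Λ)ᵀ) * P := by
  simp only [M1unf_mul_transpose, hΛ', Matrix.mul_sum, Matrix.sum_mul]
  refine Finset.sum_congr rfl fun t _ => ?_
  simp only [transpose_mul, transpose_transpose, Matrix.mul_assoc]
  rw [← Matrix.mul_assoc Q, hQ, Matrix.one_mul]

theorem isUnit_sum_mul_transpose_of_smul_M1unf_eq_diagonal
    {Λ : Fin T → Matrix (Fin k1) (Fin k2) ℝ} {c : ℝ} {d : Fin k1 → ℝ}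
    (h : c • (M1unf Λ * (M1unf Λ)ᵀ) = diagonal d) (hd : ∀ i, 0 < d i) :
    IsUnit (∑ t, Λ t * (Λ t)ᵀ) :=
  isUnit_of_smul_eq_diagonal (by rwa [← M1unf_mul_transpose]) fun i => (hd i).ne'

theorem exists_sign_eq_diagonal_of_sandwich {P : Matrix (Fin k1) (Fin k1) ℝ}
    {Q : Matrix (Fin k2) (Fin k2) ℝ} (hP : P * Pᵀ = 1) (hQ : Q * Qᵀ = 1)
    {Λ Λ' : Fin T → Matrix (Fin k1) (Fin k2) ℝ} (hΛ' : ∀ t, Λ' t = Pᵀ * Λ t * Q)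
    {c : ℝ} {d d' : Fin k1 → ℝ} (h : c • (M1unf Λ * (M1unf Λ)ᵀ) = diagonal d)
    (h' : c • (M1unf Λ' * (M1unf Λ')ᵀ) = diagonal d') (hd : StrictAnti d)
    (hd' : StrictAnti d') : ∃ r : Fin k1 → ℝ, (∀ i, r i = 1 ∨ r i = -1) ∧ P = diagonal r := by
  have hP' : Pᵀ * P = 1 := mul_eq_one_comm.mp hP
  have hconj : diagonal d' = Pᵀ * diagonal d * P := by
    rw [← h', ← h, M1unf_mul_transpose_of_sandwich hQ hΛ', Matrix.mul_smul, Matrix.smul_mul]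
  refine exists_sign_eq_diagonal_of_isDiag (isDiag_of_mul_diagonal_eq_diagonal_mul hd hd'
    (exists_apply_ne_zero_of_transpose_mul_self_eq_one hP') ?_) hP'
  rw [hconj, ← Matrix.mul_assoc, ← Matrix.mul_assoc, hP, Matrix.one_mul]

end Unfolding

theorem nonempty_of_transpose_mul_self_eq_diagonal {m κ : Type*} [Fintype m] [DecidableEq κ]
    {V : Matrix m κ ℝ} {e : κ → ℝ} (hV : Vᵀ * V = diagonal e) (i : κ) (he : e i ≠ 0) :
    Nonempty m := by
  by_contra hm
  rw [not_nonempty_iff] at hm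
  apply he
  rw [← diagonal_apply_eq e i, ← hV, mul_apply, Finset.univ_eq_empty, Finset.sum_empty]

/-- Proposition 1: two admissible parameter tuples generating the same
array agree up to diagonal ±1 sign matrices: `Θ' = Θ R1`, `Φ' = Φ R2`,
`Λ'_t = R1 Λ_t R2`. -/
theorem identifiability {n T k1 k2 kα kβ : ℕ}
    (Θ Θ' : Matrix (Fin n) (Fin k1) ℝ) (Φ Φ' : Matrix (Fin n) (Fin k2) ℝ)
    (Λ Λ' : Fin T → Matrix (Fin k1) (Fin k2) ℝ)
    (α β α' β' : Matrix (Fin n) (Fin T) ℝ)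
    (Uα Uα' : Matrix (Fin n) (Fin kα) ℝ) (Vα Vα' : Matrix (Fin T) (Fin kα) ℝ)
    (Uβ Uβ' : Matrix (Fin n) (Fin kβ) ℝ) (Vβ Vβ' : Matrix (Fin T) (Fin kβ) ℝ)
    (h : Admissible Θ Φ Λ α β Uα Vα Uβ Vβ)
    (h' : Admissible Θ' Φ' Λ' α' β' Uα' Vα' Uβ' Vβ')
    (hsame : ∀ (i j : Fin n) (t : Fin T),
      Θ i ⬝ᵥ (Λ t *ᵥ Φ j) + β i t + α j t = Θ' i ⬝ᵥ (Λ' t *ᵥ Φ' j) + β' i t + α' j t) :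
    ∃ (r1 : Fin k1 → ℝ) (r2 : Fin k2 → ℝ),
      (∀ i, r1 i = 1 ∨ r1 i = -1) ∧ (∀ j, r2 j = 1 ∨ r2 j = -1) ∧
      Θ' = Θ * Matrix.diagonal r1 ∧ Φ' = Φ * Matrix.diagonal r2 ∧
      ∀ t, Λ' t = Matrix.diagonal r1 * Λ t * Matrix.diagonal r2 := by
  obtain ⟨-, -, hΘ, hΦ, hΘc, -, hΦc, -, ⟨d1, hd1, hd1a, hd1p⟩, ⟨d2, hd2, hd2a, hd2p⟩,
    ⟨-, V, e, -, -, hV, -, he⟩, -⟩ := h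
  obtain ⟨-, -, hΘ', hΦ', hΘc', -, hΦc', -, ⟨d1', hd1', hd1a', -⟩, ⟨d2', hd2', hd2a', -⟩, -⟩ := h'
  have hn : (0 : ℝ) < n := Nat.cast_pos.mpr
    (nonempty_of_transpose_mul_self_eq_diagonal hV 0 (he 0).ne').some.2.pos
  set P := (n : ℝ)⁻¹ • (Θᵀ * Θ')
  set Q := (n : ℝ)⁻¹ • (Φᵀ * Φ')
  have hΛ t : Λ t = P * Λ' t * Qᵀ :=
    eq_mul_mul_transpose_of_centered hn.ne' hΘ hΦ hΘc hΦc (hsame · · t)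
  have hΛ' t : Λ' t = Pᵀ * Λ t * Q := by
    simpa [P, Q] using eq_mul_mul_transpose_of_centered hn.ne' hΘ' hΦ' hΘc' hΦc'
      fun i j => (hsame i j t).symm
  have hP₁ : P * Pᵀ ≤ 1 := mul_transpose_self_le_one hn hΘ hΘ'
  have hP₂ : Pᵀ * P ≤ 1 := transpose_mul_self_le_one hn hΘ hΘ'
  have hQ₁ : Q * Qᵀ ≤ 1 := mul_transpose_self_le_one hn hΦ hΦ'
  have hQ₂ : Qᵀ * Q ≤ 1 := transpose_mul_self_le_one hn hΦ hΦ'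
  have hP : P * Pᵀ = 1 := mul_transpose_eq_one_of_sandwich hP₁ hP₂ hQ₁ hQ₂ hΛ' hΛ
    (isUnit_sum_mul_transpose_of_smul_M1unf_eq_diagonal hd1 hd1p)
  have hΛT t : (Λ t)ᵀ = Q * (Λ' t)ᵀ * Pᵀ := by
    simp only [hΛ t, transpose_mul, transpose_transpose, Matrix.mul_assoc]
  have hΛT' t : (Λ' t)ᵀ = Qᵀ * (Λ t)ᵀ * P := by
    simp only [hΛ' t, transpose_mul, transpose_transpose, Matrix.mul_assoc]
  -- `M2unf Λ` is definitionally `M1unf` of the transposed layers.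
  have hQ : Q * Qᵀ = 1 := mul_transpose_eq_one_of_sandwich hQ₁ hQ₂ hP₁ hP₂ hΛT' hΛT
    (isUnit_sum_mul_transpose_of_smul_M1unf_eq_diagonal hd2 hd2p)
  obtain ⟨r1, hr1, hPr⟩ := exists_sign_eq_diagonal_of_sandwich hP hQ hΛ' hd1 hd1' hd1a hd1a'
  obtain ⟨r2, hr2, hQr⟩ := exists_sign_eq_diagonal_of_sandwich hQ hP hΛT' hd2 hd2' hd2a hd2a'
  refine ⟨r1, r2, hr1, hr2, ?_, ?_, fun t => by rw [hΛ' t, hPr, hQr, diagonal_transpose]⟩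
  · rw [← hPr]
    exact eq_mul_of_transpose_mul_self_eq_one hn.ne' hΘ hΘ' (mul_eq_one_comm.mp hP)
  · rw [← hQr]
    exact eq_mul_of_transpose_mul_self_eq_one hn.ne' hΦ hΦ' (mul_eq_one_comm.mp hQ)
end
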